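/- Deterministic correctness of conditional independence testing: let G* be a simple graph on V = {1,…,p} and suppose (i) every pair (i,j) ∉ E(G*) has a separator S in G* with |S| ≤ η and ρ_{ij|S} = 0 for every such separator, and (ii) every edge (i,j) ∈ E(G*) satisfies |ρ_{ij|S}| ≥ ρ_min for all S ⊆ V∖{i,j} with |S| ≤ η. If the data is such that | |ρ̂_{ij|S}| − |ρ_{ij|S}| | ≤ ε for every triple (i,j,S) with i ≠ j and |S| ≤ η, and if ε ≤ τ and ρ_min > τ + ε, then the CIT estimator Ĝ with parameters (η, τ) equals G*. -/

import Mathlib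

open MeasureTheory Matrix Finset
open scoped ENNReal

noncomputable section

/-- Conditional covariance `Σ_{ij|S} = Σ_{ij} - Σ_{i,S} Σ_{S,S}⁻¹ Σ_{S,j}`. -/
def condCov {p : ℕ} (K : Matrix (Fin p) (Fin p) ℝ) (i j : Fin p) (S : Finset (Fin p)) : ℝ :=
  K i j -
    (fun s : {x // x ∈ S} => K i s.1) ⬝ᵥ
      ((K.submatrix (fun s : {x // x ∈ S} => s.1) fun s : {x // x ∈ S} => s.1)⁻¹ *ᵥ
        fun s : {x // x ∈ S} => K s.1 j)

/-- Conditional correlation coefficient `ρ_{ij|S}`. -/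
def condCorr {p : ℕ} (K : Matrix (Fin p) (Fin p) ℝ) (i j : Fin p) (S : Finset (Fin p)) : ℝ :=
  condCov K i j S / Real.sqrt (condCov K i i S * condCov K j j S)

/-- Empirical covariance matrix of samples `x^{(1)},…,x^{(n)}`. -/
def empCov {p n : ℕ} (x : Fin n → Fin p → ℝ) : Matrix (Fin p) (Fin p) ℝ :=
  fun i j => (∑ k, x k i * x k j) / (n : ℝ)

/-- `S` separates `i` and `j` in `G`: every walk from `i` to `j` meets `S`. -/
def Separates {V : Type*} (G : SimpleGraph V) (S : Finset V) (i j : V) : Prop :=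
  ∀ w : G.Walk i j, ∃ v ∈ S, v ∈ w.support

/-- The CIT (conditional independence test) graph estimator with parameters `(η, τ)`. -/
def CITGraph {p : ℕ} (η : ℕ) (τ : ℝ) (K : Matrix (Fin p) (Fin p) ℝ) : SimpleGraph (Fin p) where
  Adj i j := i ≠ j ∧ ∀ S : Finset (Fin p), S.card ≤ η → i ∉ S → j ∉ S →
    τ < |condCorr K i j S| ∧ τ < |condCorr K j i S|
  symm := by
    constructor
    intro i j h
    exact ⟨h.1.symm, fun S hS hj hi => (h.2 S hS hi hj).symm⟩
  loopless := by constructor; intro i h; exact h.1 rfl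

/-- The CIT estimator restricted to coordinates in `A`. -/
def CITAdjOn {p : ℕ} (A : Finset (Fin p)) (η : ℕ) (τ : ℝ)
    (K : Matrix (Fin p) (Fin p) ℝ) (i j : Fin p) : Prop :=
  i ≠ j ∧ ∀ S : Finset (Fin p), S ⊆ A → S.card ≤ η → i ∉ S → j ∉ S →
    τ < |condCorr K i j S| ∧ τ < |condCorr K j i S|

/-- Density of the `N(0,K)` multivariate normal. -/
def gaussPdf {p : ℕ} (K : Matrix (Fin p) (Fin p) ℝ) (x : Fin p → ℝ) : ℝ :=
  (Real.sqrt ((2 * Real.pi) ^ p * K.det))⁻¹ * Real.exp (-(x ⬝ᵥ (K⁻¹ *ᵥ x)) / 2)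

/-- The multivariate normal measure `N(0,K)` on `ℝ^p`. -/
def gaussMeasure {p : ℕ} (K : Matrix (Fin p) (Fin p) ℝ) : Measure (Fin p → ℝ) :=
  volume.withDensity fun x => ENNReal.ofReal (gaussPdf K x)

/-- Law of `n` i.i.d. samples from `N(0,K)`. -/
def sampleMeasure {p : ℕ} (n : ℕ) (K : Matrix (Fin p) (Fin p) ℝ) :
    Measure (Fin n → Fin p → ℝ) :=
  Measure.pi fun _ => gaussMeasure K

/-! A non-edge of `G` has a small separator on which `ρ` vanishes, so there `|ρ̂| ≤ ε ≤ τ` and the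
test deletes the pair; on an edge every `|ρ|` is at least `ρmin > τ + ε`, so every `|ρ̂|` exceeds `τ`
and the test keeps it. -/

def CondCorrClose {p : ℕ} (η : ℕ) (ε : ℝ) (K Khat : Matrix (Fin p) (Fin p) ℝ) : Prop :=
  ∀ i j : Fin p, i ≠ j → ∀ S : Finset (Fin p), S.card ≤ η → i ∉ S → j ∉ S →
    |(|condCorr Khat i j S| - |condCorr K i j S|)| ≤ ε

namespace CondCorrClose

variable {p η : ℕ} {ε τ : ℝ} {K Khat : Matrix (Fin p) (Fin p) ℝ} {i j : Fin p} {S : Finset (Fin p)}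

theorem abs_le_of_condCorr_eq_zero (h : CondCorrClose η ε K Khat) (hij : i ≠ j)
    (hS : S.card ≤ η) (hi : i ∉ S) (hj : j ∉ S) (hzero : condCorr K i j S = 0) :
    |condCorr Khat i j S| ≤ ε := by
  simpa [hzero] using h i j hij S hS hi hj

theorem lt_abs_of_add_lt_abs (h : CondCorrClose η ε K Khat) (hij : i ≠ j)
    (hS : S.card ≤ η) (hi : i ∉ S) (hj : j ∉ S) (hlt : τ + ε < |condCorr K i j S|) :
    τ < |condCorr Khat i j S| := by
  linarith [(abs_le.mp (h i j hij S hS hi hj)).1]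

end CondCorrClose

/-- deterministic correctness of conditional independence testing. -/
theorem cit_deterministic_correctness {p η : ℕ}
    (K Khat : Matrix (Fin p) (Fin p) ℝ) (G : SimpleGraph (Fin p)) (ρmin ε τ : ℝ)
    -- (i): every non-edge has a small separator, and every small separator
    -- renders the conditional correlation zero
    (hsep : ∀ i j : Fin p, i ≠ j → ¬G.Adj i j →
      (∃ S : Finset (Fin p), S.card ≤ η ∧ i ∉ S ∧ j ∉ S ∧ Separates G S i j) ∧
      (∀ S : Finset (Fin p), S.card ≤ η → i ∉ S → j ∉ S → Separates G S i j →
        condCorr K i j S = 0))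
    -- (ii): edges have conditional correlation at least ρmin
    (hedge : ∀ i j : Fin p, G.Adj i j → ∀ S : Finset (Fin p),
      S.card ≤ η → i ∉ S → j ∉ S → ρmin ≤ |condCorr K i j S|)
    -- data accuracy
    (hdata : ∀ i j : Fin p, i ≠ j → ∀ S : Finset (Fin p), S.card ≤ η → i ∉ S → j ∉ S →
      abs (|condCorr Khat i j S| - |condCorr K i j S|) ≤ ε)
    (hε : ε ≤ τ) (hρ : τ + ε < ρmin) :
    CITGraph η τ Khat = G := by
  have hclose : CondCorrClose η ε K Khat := hdata
  ext i j
  constructor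
  · rintro ⟨hij, hpass⟩
    by_contra hG
    obtain ⟨⟨S, hS, hi, hj, hsepS⟩, hzero⟩ := hsep i j hij hG
    have hsmall := hclose.abs_le_of_condCorr_eq_zero hij hS hi hj (hzero S hS hi hj hsepS)
    linarith [(hpass S hS hi hj).1]
  · intro hG
    refine ⟨hG.ne, fun S hS hi hj => ⟨?_, ?_⟩⟩
    · exact hclose.lt_abs_of_add_lt_abs hG.ne hS hi hj
        (by linarith [hedge i j hG S hS hi hj])
    · exact hclose.lt_abs_of_add_lt_abs hG.ne' hS hj hi
        (by linarith [hedge j i hG.symm S hS hj hi])
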